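/- Let B be the differential operator Bf = f' + (2πia/b) t f. For f ∈ S(ℝ), 𝓕_A(Bf)(ω) = 2πi ((ω − p)/b) 𝓕_A(f)(ω). -/

import Mathlib

/-
The SAFT kernel is a chirp `t ↦ exp (i (α t² + β t + γ))` with `α = πa/b` and `β = 2π(p - ω)/b`,
whose derivative is `i (2αt + β)` times itself. Hence `(Bf) · chirp = (f · chirp)' - iβ f · chirp`,
and the integral of the derivative of the integrable function `f · chirp` vanishes.
-/

open MeasureTheory Complex

noncomputable def SAFT (a b d p q : ℝ) (f : ℝ → ℂ) (ω : ℝ) : ℂ :=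
  (1 / Real.sqrt |b|) *
    ∫ t : ℝ, f t *
      Complex.exp ((Real.pi * Complex.I / b) *
        (a * t ^ 2 + 2 * p * t - 2 * ω * t + 2 * (b * q - d * p) * ω + d * ω ^ 2))

noncomputable def chirp (α β γ t : ℝ) : ℂ := cexp (I * (α * t ^ 2 + β * t + γ))

section Chirp

variable (α β γ : ℝ)

theorem norm_chirp (t : ℝ) : ‖chirp α β γ t‖ = 1 := by
  rw [chirp, mul_comm]
  exact_mod_cast norm_exp_ofReal_mul_I _

theorem continuous_chirp : Continuous (chirp α β γ) := by
  unfold chirp; fun_prop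

theorem hasDerivAt_chirp (t : ℝ) :
    HasDerivAt (chirp α β γ) (I * (2 * α * t + β) * chirp α β γ t) t := by
  have hφ : HasDerivAt (fun s : ℝ => α * s ^ 2 + β * s + γ) (2 * α * t + β) t := by
    have := (((hasDerivAt_pow 2 t).const_mul α).add ((hasDerivAt_id t).const_mul β)).add_const γ
    simp only [id, Nat.cast_ofNat, mul_one] at this
    exact this.congr_deriv (by ring)
  have hchirp : chirp α β γ = fun s => cexp (I * ((α * s ^ 2 + β * s + γ : ℝ) : ℂ)) := by
    ext s; push_cast [chirp]; rfl
  rw [hchirp]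
  exact (hφ.ofReal_comp.const_mul I).cexp.congr_deriv (by push_cast; ring)

theorem SchwartzMap.integrable_mul_chirp (f : SchwartzMap ℝ ℂ) :
    Integrable (fun t => f t * chirp α β γ t) :=
  f.integrable.mul_bdd (continuous_chirp α β γ).aestronglyMeasurable
    (.of_forall fun t => (norm_chirp α β γ t).le)

theorem SchwartzMap.integral_deriv_add_mul_mul_chirp (f : SchwartzMap ℝ ℂ) :
    ∫ t, (deriv f t + 2 * I * α * t * f t) * chirp α β γ t =
      -(I * β) * ∫ t, f t * chirp α β γ t := by
  have hg : Function.HasTemperateGrowth (fun t : ℝ => 2 * I * α * t) := by fun_prop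
  set g : SchwartzMap ℝ ℂ :=
    SchwartzMap.derivCLM ℂ ℂ f + SchwartzMap.smulLeftCLM ℂ (fun t : ℝ => 2 * I * α * t) f
  have hg_apply (t : ℝ) : g t = deriv f t + 2 * I * α * t * f t := by
    simp [g, SchwartzMap.smulLeftCLM_apply_apply hg]
  have hderiv (t : ℝ) : HasDerivAt (fun s => f s * chirp α β γ s)
      (g t * chirp α β γ t + I * β * (f t * chirp α β γ t)) t := by
    refine ((f.hasDerivAt t).mul (hasDerivAt_chirp α β γ t)).congr_deriv ?_
    rw [hg_apply]; ring
  have hfe := f.integrable_mul_chirp α β γ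
  have hge := g.integrable_mul_chirp α β γ
  have h0 := integral_eq_zero_of_hasDerivAt_of_integrable hderiv
    (hge.add (hfe.const_mul (I * β))) hfe
  rw [integral_add hge (hfe.const_mul _), integral_const_mul] at h0
  simp_rw [← hg_apply]
  linear_combination h0

end Chirp

theorem SAFT_of_B_general (a b d p q : ℝ)
    (f : SchwartzMap ℝ ℂ) (ω : ℝ) :
    SAFT a b d p q
        (fun t => deriv (⇑f) t + (2 * Real.pi * Complex.I * a / b) * t * f t) ω =
      2 * Real.pi * Complex.I * ((ω - p) / b) * SAFT a b d p q (⇑f) ω := by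
  have hkernel (t : ℝ) : Complex.exp ((Real.pi * Complex.I / b) *
      (a * t ^ 2 + 2 * p * t - 2 * ω * t + 2 * (b * q - d * p) * ω + d * ω ^ 2)) =
      chirp (Real.pi * a / b) (2 * Real.pi * (p - ω) / b)
        (Real.pi * (2 * (b * q - d * p) * ω + d * ω ^ 2) / b) t := by
    rw [chirp]; congr 1; push_cast; ring
  have hB (t : ℝ) : (2 * Real.pi * Complex.I * a / b) * t * f t =
      2 * I * ((Real.pi * a / b : ℝ) : ℂ) * t * f t := by
    push_cast; ring
  simp only [SAFT, hkernel, hB, f.integral_deriv_add_mul_mul_chirp]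
  push_cast
  ring

theorem SAFT_of_B (a b c d p q : ℝ) (hb : b ≠ 0) (hA : a * d - b * c = 1)
    (f : SchwartzMap ℝ ℂ) (ω : ℝ) :
    SAFT a b d p q
        (fun t => deriv (⇑f) t + (2 * Real.pi * Complex.I * a / b) * t * f t) ω =
      2 * Real.pi * Complex.I * ((ω - p) / b) * SAFT a b d p q (⇑f) ω :=
  SAFT_of_B_general a b d p q f ω
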